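/- Let P be a symmetric positive definite n×n matrix, F, G₁, …, G_m real n×n matrices, h > 0, ᾱ_u > 0 with FᵀPF ≤ ᾱ_u P (as symmetric matrices), and c̄ ∈ (0,1). Suppose FᵀP + PF + Σ_{j=1}^m GⱼᵀPGⱼ ≤ −((c̄/h) + ᾱ_u h) P. Then (I + hF)ᵀP(I + hF) + h Σ_{j=1}^m GⱼᵀPGⱼ ≤ (1 − c̄) P. -/

import Mathlib

/-!
Expanding `(I + hF)ᵀ P (I + hF) = P + h (FᵀP + PF) + h² FᵀPF` shows that the discrete-time defect
`(1 - c̄) P - ((I + hF)ᵀ P (I + hF) + h Σ GⱼᵀPGⱼ)` equals `h` times the continuous-time defect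
plus `h²` times the defect of `FᵀPF ≤ ᾱ_u P`; both are positive semidefinite and `h > 0`.
-/

open Matrix

section

variable {ι R : Type*} [Fintype ι] [DecidableEq ι]

theorem Matrix.transpose_one_add_smul_mul_mul [CommRing R] (F P : Matrix ι ι R) (h : R) :
    (1 + h • F)ᵀ * P * (1 + h • F) = P + h • (Fᵀ * P + P * F) + (h * h) • (Fᵀ * P * F) := by
  simp only [transpose_add, transpose_one, transpose_smul, add_mul, mul_add, one_mul, mul_one,
    Matrix.smul_mul, Matrix.mul_smul, smul_smul]
  module

theorem Matrix.euler_lyapunov_defect_eq [Field R] (P F S : Matrix ι ι R) {h : R} (hh : h ≠ 0)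
    (c a : R) :
    (1 - c) • P - ((1 + h • F)ᵀ * P * (1 + h • F) + h • S)
      = h • ((-(c / h + a * h)) • P - (Fᵀ * P + P * F + S))
        + (h * h) • (a • P - Fᵀ * P * F) := by
  have hscalar : h * -(c / h + a * h) = -c - h * h * a := by field_simp; ring
  rw [transpose_one_add_smul_mul_mul, smul_sub h, smul_smul, hscalar]
  module

end

theorem stmt15_general (n m : ℕ) (P F : Matrix (Fin n) (Fin n) ℝ)
    (G : Fin m → Matrix (Fin n) (Fin n) ℝ)
    (h c au : ℝ) (hh : 0 < h)
    (hFu : (au • P - Fᵀ * P * F).PosSemidef)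
    (hmain : ((-(c / h + au * h)) • P
        - (Fᵀ * P + P * F + ∑ j, (G j)ᵀ * P * G j)).PosSemidef) :
    ((1 - c) • P
        - ((1 + h • F)ᵀ * P * (1 + h • F) + h • ∑ j, (G j)ᵀ * P * G j)).PosSemidef := by
  rw [euler_lyapunov_defect_eq P F _ hh.ne']
  exact (hmain.smul hh.le).add (hFu.smul (mul_self_nonneg h))

/-- Continuous-time Lyapunov–Itô LMI implies the discrete-time Lyapunov LMI for
the Euler–Maruyama discretization: if `FᵀPF ≤ ᾱ_u P` and
`FᵀP + PF + Σ GⱼᵀPGⱼ ≤ −(c̄/h + ᾱ_u h)P`, then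
`(I + hF)ᵀP(I + hF) + h Σ GⱼᵀPGⱼ ≤ (1 − c̄)P`. -/
theorem stmt15 (n m : ℕ) (P F : Matrix (Fin n) (Fin n) ℝ)
    (G : Fin m → Matrix (Fin n) (Fin n) ℝ)
    (hP : P.PosDef) (h c au : ℝ) (hh : 0 < h) (hc : c ∈ Set.Ioo (0 : ℝ) 1)
    (hau : 0 < au)
    (hFu : (au • P - Fᵀ * P * F).PosSemidef)
    (hmain : ((-(c / h + au * h)) • P
        - (Fᵀ * P + P * F + ∑ j, (G j)ᵀ * P * G j)).PosSemidef) :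
    ((1 - c) • P
        - ((1 + h • F)ᵀ * P * (1 + h • F) + h • ∑ j, (G j)ᵀ * P * G j)).PosSemidef :=
  stmt15_general n m P F G h c au hh hFu hmain
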